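/- arXiv:2508.17335 — 2 statements merged into one kernel-verified Lean document; each statement's English description precedes it below -/
import Mathlib

section
/- For every real r with 0 < r < 1 and every d ∈ ℕ, the (d+1)×(d+1) matrix M with entries M_{j,k} = ∑_{n=0}^∞ binom(n,j)·binom(n,k)·r^{2n} for j,k ∈ {0,…,d} (each series converges) satisfies det M = r^{−(d+1)}·(r/(1−r²))^{(d+1)²}. -/
/-!
Write `S j k = ∑ₙ C(n,j) C(n,k) xⁿ`. Pascal's rule in both indices gives
`(1 - x) S (j+1) (k+1) = x (S j k + S j (k+1) + S (j+1) k)`, and induction identifies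
`(1 - x)^(j+k+1) S j k = ∑ᵢ C(j,i) C(k,i) x^(j+k-i)`. Hence the moment matrix factors as `L D Lᵀ`
with `L j i = C(j,i) (x/(1-x))^j` lower triangular and `D = diag (x⁻ⁱ/(1-x))`, so its
determinant is `∏ᵢ xⁱ/(1-x)^(2i+1)`, which for `x = r²` is `r⁻¹ (r/(1-r²))^(2i+1)` per factor.
-/

open Finset
open scoped Matrix

noncomputable def binomialMoment (x : ℝ) (j k : ℕ) : ℝ :=
  ∑' n : ℕ, (n.choose j : ℝ) * (n.choose k : ℝ) * x ^ n

-- Used at `u = x⁻¹`: then `x^(j+k) * binomialPoly u j k = ∑ᵢ C(j,i) C(k,i) x^(j+k-i)` without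
-- truncated subtraction in the exponent.
noncomputable def binomialPoly (u : ℝ) (j k : ℕ) : ℝ :=
  ∑ i ∈ range (k + 1), (j.choose i : ℝ) * (k.choose i : ℝ) * u ^ i

section binomialPoly

variable (u : ℝ)

lemma binomialPoly_eq_sum_range {N : ℕ} (j : ℕ) {k : ℕ} (hk : k < N) :
    binomialPoly u j k = ∑ i ∈ range N, (j.choose i : ℝ) * (k.choose i : ℝ) * u ^ i := by
  refine sum_subset (range_subset_range.2 hk) fun i _ hi => ?_
  rw [Nat.choose_eq_zero_of_lt (n := k) (by simpa using hi)]
  simp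

lemma binomialPoly_zero_left (k : ℕ) : binomialPoly u 0 k = 1 := by
  simp [binomialPoly, sum_range_succ', Nat.choose_zero_succ]

lemma binomialPoly_zero_right (j : ℕ) : binomialPoly u j 0 = 1 := by
  simp [binomialPoly]

lemma binomialPoly_succ_succ (j k : ℕ) :
    binomialPoly u (j + 1) (k + 1) = (u - 1) * binomialPoly u j k
      + binomialPoly u j (k + 1) + binomialPoly u (j + 1) k := by
  suffices binomialPoly u (j + 1) (k + 1) - binomialPoly u j (k + 1) - binomialPoly u (j + 1) k
      + binomialPoly u j k = u * binomialPoly u j k by linear_combination this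
  have hk : k < k + 2 := by omega
  conv_rhs => rw [binomialPoly, mul_sum]
  rw [binomialPoly_eq_sum_range u _ (Nat.lt_succ_self (k + 1)),
    binomialPoly_eq_sum_range u j (Nat.lt_succ_self (k + 1)),
    binomialPoly_eq_sum_range u (j + 1) hk, binomialPoly_eq_sum_range u j hk,
    ← sum_sub_distrib, ← sum_sub_distrib, ← sum_add_distrib, sum_range_succ']
  simp only [Nat.choose_succ_succ, Nat.choose_zero_right]
  push_cast
  simp only [one_mul, sub_self, zero_sub, neg_add_cancel, add_zero]
  exact sum_congr rfl fun i _ => by ring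

end binomialPoly

lemma one_sub_ne_zero_of_norm_lt_one {x : ℝ} (hx : ‖x‖ < 1) : 1 - x ≠ 0 :=
  sub_ne_zero.2 fun h => by simp [← h] at hx

section binomialMoment

variable {x : ℝ} (hx : ‖x‖ < 1)
include hx

lemma summable_choose_mul_choose_mul_pow (j k : ℕ) :
    Summable fun n : ℕ => (n.choose j : ℝ) * (n.choose k : ℝ) * x ^ n := by
  refine Summable.of_norm_bounded
    (summable_pow_mul_geometric_of_norm_lt_one (j + k) (r := ‖x‖) (by rwa [norm_norm])) fun n => ?_
  rw [norm_mul, norm_pow, pow_add, Real.norm_of_nonneg (by positivity)]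
  gcongr
  · exact_mod_cast Nat.choose_le_pow n j
  · exact_mod_cast Nat.choose_le_pow n k

lemma hasSum_binomialMoment (j k : ℕ) :
    HasSum (fun n : ℕ => (n.choose j : ℝ) * (n.choose k : ℝ) * x ^ n) (binomialMoment x j k) :=
  (summable_choose_mul_choose_mul_pow hx j k).hasSum

lemma binomialMoment_zero_zero : binomialMoment x 0 0 = (1 - x)⁻¹ := by
  simpa [binomialMoment] using tsum_geometric_of_norm_lt_one hx

lemma binomialMoment_right_succ (j k : ℕ) :
    binomialMoment x j (k + 1)
      = x * ∑' n : ℕ, ((n + 1).choose j : ℝ) * ((n + 1).choose (k + 1) : ℝ) * x ^ n := by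
  rw [binomialMoment, (summable_choose_mul_choose_mul_pow hx j (k + 1)).tsum_eq_zero_add,
    ← tsum_mul_left]
  simp only [Nat.choose_zero_succ, Nat.cast_zero, mul_zero, zero_mul, zero_add]
  exact tsum_congr fun n => by ring

lemma one_sub_mul_binomialMoment_zero_succ (k : ℕ) :
    (1 - x) * binomialMoment x 0 (k + 1) = x * binomialMoment x 0 k := by
  have hs := hasSum_binomialMoment hx
  have h : HasSum (fun n : ℕ => ((n + 1).choose 0 : ℝ) * ((n + 1).choose (k + 1) : ℝ) * x ^ n)
      (binomialMoment x 0 k + binomialMoment x 0 (k + 1)) := by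
    convert (hs 0 k).add (hs 0 (k + 1)) using 1
    funext n
    push_cast [Nat.choose_succ_succ, Nat.choose_zero_right]
    ring
  have e := binomialMoment_right_succ hx 0 k
  rw [h.tsum_eq] at e
  linear_combination e

lemma one_sub_mul_binomialMoment_succ_succ (j k : ℕ) :
    (1 - x) * binomialMoment x (j + 1) (k + 1)
      = x * (binomialMoment x j k + binomialMoment x j (k + 1) + binomialMoment x (j + 1) k) := by
  have hs := hasSum_binomialMoment hx
  have h : HasSum
      (fun n : ℕ => ((n + 1).choose (j + 1) : ℝ) * ((n + 1).choose (k + 1) : ℝ) * x ^ n)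
      (binomialMoment x j k + binomialMoment x j (k + 1) + binomialMoment x (j + 1) k
        + binomialMoment x (j + 1) (k + 1)) := by
    convert (((hs j k).add (hs j (k + 1))).add (hs (j + 1) k)).add
      (hs (j + 1) (k + 1)) using 1
    funext n
    push_cast [Nat.choose_succ_succ]
    ring
  have e := binomialMoment_right_succ hx (j + 1) k
  rw [h.tsum_eq] at e
  linear_combination e

end binomialMoment

lemma binomialMoment_comm (x : ℝ) (j k : ℕ) : binomialMoment x j k = binomialMoment x k j :=
  tsum_congr fun n => by ring

theorem one_sub_pow_mul_binomialMoment {x : ℝ} (hx0 : x ≠ 0) (hx : ‖x‖ < 1) :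
    ∀ j k : ℕ,
      (1 - x) ^ (j + k + 1) * binomialMoment x j k = x ^ (j + k) * binomialPoly x⁻¹ j k
  | 0, 0 => by
    simp [binomialMoment_zero_zero hx, binomialPoly_zero_left, one_sub_ne_zero_of_norm_lt_one hx]
  | 0, k + 1 => by
    have ih := one_sub_pow_mul_binomialMoment hx0 hx 0 k
    rw [binomialPoly_zero_left] at ih ⊢
    linear_combination (1 - x) ^ (k + 1) * one_sub_mul_binomialMoment_zero_succ hx k + x * ih
  | j + 1, 0 => by
    have ih := one_sub_pow_mul_binomialMoment hx0 hx j 0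
    rw [binomialPoly_zero_right] at ih ⊢
    rw [binomialMoment_comm] at ih ⊢
    linear_combination (1 - x) ^ (j + 1) * one_sub_mul_binomialMoment_zero_succ hx j + x * ih
  | j + 1, k + 1 => by
    have ih₁ := one_sub_pow_mul_binomialMoment hx0 hx j k
    have ih₂ := one_sub_pow_mul_binomialMoment hx0 hx j (k + 1)
    have ih₃ := one_sub_pow_mul_binomialMoment hx0 hx (j + 1) k
    rw [binomialPoly_succ_succ]
    linear_combination (1 - x) ^ (j + k + 2) * one_sub_mul_binomialMoment_succ_succ hx j k
      + x * (1 - x) * ih₁ + x * ih₂ + x * ih₃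
      - x ^ (j + k + 1) * binomialPoly x⁻¹ j k * mul_inv_cancel₀ hx0

lemma binomialMoment_eq_mul_binomialPoly {x : ℝ} (hx0 : x ≠ 0) (hx : ‖x‖ < 1) (j k : ℕ) :
    binomialMoment x j k = (x / (1 - x)) ^ (j + k) / (1 - x) * binomialPoly x⁻¹ j k := by
  rw [div_pow, div_div, ← pow_succ, div_mul_eq_mul_div, ← one_sub_pow_mul_binomialMoment hx0 hx,
    mul_div_cancel_left₀ _ (pow_ne_zero _ (one_sub_ne_zero_of_norm_lt_one hx))]

section scaledPascal

variable {R : Type*} [CommRing R]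

def scaledPascalMatrix (n : ℕ) (y : R) : Matrix (Fin n) (Fin n) R :=
  Matrix.of fun j i => ((j : ℕ).choose i : R) * y ^ (j : ℕ)

lemma det_scaledPascalMatrix (n : ℕ) (y : R) :
    (scaledPascalMatrix n y).det = ∏ i : Fin n, y ^ (i : ℕ) := by
  refine (Matrix.det_of_isLowerTriangular _ fun j i hji => ?_).trans (by simp [scaledPascalMatrix])
  simp [scaledPascalMatrix, Nat.choose_eq_zero_of_lt (show (j : ℕ) < i from hji)]

end scaledPascal

theorem binomialMomentMatrix_eq {x : ℝ} (hx0 : x ≠ 0) (hx : ‖x‖ < 1) (n : ℕ) :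
    Matrix.of (fun j k : Fin n => binomialMoment x j k)
      = scaledPascalMatrix n (x / (1 - x))
        * Matrix.diagonal (fun i : Fin n => (1 - x)⁻¹ * x⁻¹ ^ (i : ℕ))
        * (scaledPascalMatrix n (x / (1 - x)))ᵀ := by
  ext j k
  rw [Matrix.mul_apply]
  simp only [Matrix.of_apply, Matrix.mul_diagonal, Matrix.transpose_apply, scaledPascalMatrix]
  rw [binomialMoment_eq_mul_binomialPoly hx0 hx, binomialPoly_eq_sum_range _ _ k.isLt,
    ← Fin.sum_univ_eq_sum_range, mul_sum]
  exact sum_congr rfl fun i _ => by ring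

theorem det_binomialMomentMatrix {x : ℝ} (hx0 : x ≠ 0) (hx : ‖x‖ < 1) (n : ℕ) :
    (Matrix.of fun j k : Fin n => binomialMoment x j k).det
      = ∏ i : Fin n, x ^ (i : ℕ) / (1 - x) ^ (2 * (i : ℕ) + 1) := by
  rw [binomialMomentMatrix_eq hx0 hx, Matrix.det_mul, Matrix.det_mul, Matrix.det_transpose,
    det_scaledPascalMatrix, Matrix.det_diagonal, ← prod_mul_distrib, ← prod_mul_distrib]
  have := one_sub_ne_zero_of_norm_lt_one hx
  refine prod_congr rfl fun i _ => ?_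
  rw [div_pow, inv_pow]
  field_simp
  ring

lemma prod_range_pow_two_mul_add_one {M : Type*} [CommMonoid M] (a : M) (m : ℕ) :
    ∏ i ∈ range m, a ^ (2 * i + 1) = a ^ (m ^ 2) := by
  induction m with
  | zero => simp
  | succ m ih => rw [prod_range_succ, ih, ← pow_add]; ring_nf

/-- The determinant of the moment matrix `M_{j,k} = ∑_{n≥0} C(n,j) C(n,k) r^{2n}` equals
`r^{-(d+1)} (r/(1-r²))^{(d+1)²}`. -/
theorem stmt_12 (r : ℝ) (hr0 : 0 < r) (hr1 : r < 1) (d : ℕ)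
    (M : Matrix (Fin (d + 1)) (Fin (d + 1)) ℝ)
    (hM : ∀ j k : Fin (d + 1),
      M j k = ∑' n : ℕ, (n.choose (j : ℕ) : ℝ) * (n.choose (k : ℕ) : ℝ) * r ^ (2 * n)) :
    M.det = (r ^ (d + 1))⁻¹ * (r / (1 - r ^ 2)) ^ ((d + 1) ^ 2) := by
  have hx : ‖r ^ 2‖ < 1 := by
    rw [norm_pow, Real.norm_of_nonneg hr0.le]
    exact pow_lt_one₀ hr0.le hr1 two_ne_zero
  have hM' : M = Matrix.of fun j k : Fin (d + 1) => binomialMoment (r ^ 2) j k := by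
    ext j k
    simp [hM, binomialMoment, pow_mul]
  have hfactor (i : ℕ) : (r ^ 2) ^ i / (1 - r ^ 2) ^ (2 * i + 1)
      = r⁻¹ * (r / (1 - r ^ 2)) ^ (2 * i + 1) := by
    have := one_sub_ne_zero_of_norm_lt_one hx
    rw [div_pow]
    field_simp
    ring
  rw [hM', det_binomialMomentMatrix (by positivity) hx, Fin.prod_univ_eq_prod_range
    (fun i => (r ^ 2) ^ i / (1 - r ^ 2) ^ (2 * i + 1)), prod_congr rfl fun i _ => hfactor i,
    prod_mul_distrib, prod_range_pow_two_mul_add_one, prod_const, card_range, inv_pow]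
end

section
/- For every real A > 1, every real t > 0 and every d ∈ ℕ, the (d+1)-dimensional Lebesgue volume of the set {c = (c₀,…,c_d) ∈ ℝ^{d+1} : ∑_{n=0}^∞ P_c(n)²·A^{−2n} ≤ t²} equals (A²−1)^{(d+1)²/2}·A^{−(d+1)(d+2)/2}·t^{d+1}·ω_{d+1}, where ω_{d+1} is the Lebesgue volume of the unit Euclidean ball in ℝ^{d+1}. -/
open MeasureTheory

/-- The binomial polynomial `binom(x,k) = x(x-1)⋯(x-k+1)/k!`. -/
noncomputable def binom (x : ℝ) (k : ℕ) : ℝ :=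
  (∏ i ∈ Finset.range k, (x - i)) / (Nat.factorial k)

/-- The polynomial `P_c(x) = ∑_{k=0}^d c_k · binom(x,k)`. -/
noncomputable def Pc {d : ℕ} (c : Fin (d + 1) → ℝ) (x : ℝ) : ℝ :=
  ∑ k : Fin (d + 1), c k * binom x (k : ℕ)

/-!
With `q = A⁻²` the quadratic form is `Q(c) = ∑ₙ qⁿ P_c(n)²`. The polynomials
`p_k(n) = q⁻ⁿ Δᵏ (qⁿ C(n,k))` (Meixner polynomials) are orthogonal for this weight: summing by
parts `k` times moves `Δᵏ` onto the other factor, killing every polynomial of degree `< k`, and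
gives `∑ₙ qⁿ p_k(n)² = qᵏ / (1 - q)`. In the binomial basis the coefficient matrix of the `p_k` is
upper triangular with diagonal `(q - 1)ᵏ`, so after normalisation it maps the Euclidean ball of
radius `t` onto `{Q ≤ t²}`, and the volume is `|det| · t^(d+1) · ω_{d+1}`.
-/

open Finset Function Matrix fwdDiff

lemma binom_natCast (n k : ℕ) : binom n k = n.choose k := by
  rw [binom, ← descPochhammer_eval_eq_prod_range, Nat.cast_choose_eq_descPochhammer_div]

section FwdDiff

variable {R : Type*} [CommRing R]

lemma fwdDiff_natCast_choose_succ (j : ℕ) :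
    Δ_[1] (fun n : ℕ ↦ (n.choose (j + 1) : R)) = fun n ↦ (n.choose j : R) := by
  ext n
  simp [fwdDiff, Nat.choose_succ_succ']

lemma fwdDiff_iter_natCast_choose (j k : ℕ) :
    Δ_[1] ^[k] (fun n : ℕ ↦ (n.choose (k + j) : R)) = fun n ↦ (n.choose j : R) := by
  induction k generalizing j with
  | zero => simp
  | succ k ih =>
    rw [iterate_succ_apply', show k + 1 + j = k + (j + 1) by omega, ih, fwdDiff_natCast_choose_succ]

lemma fwdDiff_iter_natCast_choose_of_lt {a k : ℕ} (h : a < k) :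
    Δ_[1] ^[k] (fun n : ℕ ↦ (n.choose a : R)) = 0 := by
  obtain ⟨m, rfl⟩ := Nat.exists_eq_add_of_lt h
  have hchoose := fwdDiff_iter_natCast_choose (R := R) 0 a
  have hconst : Δ_[1] (0 : ℕ → R) = 0 := fwdDiff_const 1 (0 : R)
  rw [add_zero] at hchoose
  rw [show a + m + 1 = m + (1 + a) by omega, iterate_add_apply, iterate_add_apply, hchoose,
    iterate_one]
  simp only [Nat.choose_zero_right, Nat.cast_one, fwdDiff_const]
  exact iterate_fixed hconst m

/-- Iterates `Δ (q^· f) = q^· ((q - 1) f + q Δ f)`. -/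
theorem fwdDiff_iter_pow_mul (q : R) (f : ℕ → R) (k n : ℕ) :
    Δ_[1] ^[k] (fun m ↦ q ^ m * f m) n =
      q ^ n * ∑ x ∈ antidiagonal k,
        k.choose x.1 * (q ^ x.1 * (q - 1) ^ x.2 * Δ_[1] ^[x.1] f n) := by
  induction k generalizing f with
  | zero => simp
  | succ k ih =>
    have hstep : Δ_[1] (fun m ↦ q ^ m * f m) = fun m ↦ q ^ m * ((q - 1) • f + q • Δ_[1] f) m := by
      ext m
      simp only [fwdDiff, Pi.add_apply, Pi.smul_apply, smul_eq_mul, pow_succ]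
      ring
    have pascal := sum_antidiagonal_choose_succ_mul
      (fun i j ↦ q ^ i * (q - 1) ^ j * Δ_[1] ^[i] f n) k
    rw [iterate_succ_apply, hstep, ih, pascal, ← sum_add_distrib]
    congr 1
    refine sum_congr rfl fun x hx ↦ ?_
    rw [HasAntidiagonal.mem_antidiagonal] at hx
    simp only [fwdDiff_iter_add, fwdDiff_iter_const_smul, Pi.add_apply, Pi.smul_apply,
      smul_eq_mul, ← iterate_succ_apply]
    rw [← hx, Nat.choose_symm_add]
    ring

end FwdDiff

section SummationByParts

variable {R : Type*} [CommRing R] [TopologicalSpace R]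

theorem tsum_fwdDiff_mul_of_eq_zero [IsTopologicalRing R] [T2Space R] {G H : ℕ → R}
    (hG : G 0 = 0) (h₁ : Summable fun n ↦ G (n + 1) * H n) (h₂ : Summable fun n ↦ G n * H n) :
    ∑' n, Δ_[1] G n * H n = -∑' n, G (n + 1) * Δ_[1] H n := by
  have h₃ : Summable fun n ↦ G (n + 1) * H (n + 1) := (summable_nat_add_iff 1).2 h₂
  have hshift : ∑' n, G n * H n = ∑' n, G (n + 1) * H (n + 1) := by
    rw [h₂.tsum_eq_zero_add, hG, zero_mul, zero_add]
  simp only [fwdDiff, sub_mul, mul_sub]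
  rw [h₁.tsum_sub h₂, h₃.tsum_sub h₁, hshift]
  abel

def ShiftSummable (g h : ℕ → R) : Prop :=
  ∀ i j, Summable fun n ↦ g (n + i) * h (n + j)

namespace ShiftSummable

variable {g h : ℕ → R}

lemma summable (hs : ShiftSummable g h) : Summable fun n ↦ g n * h n := by
  simpa using hs 0 0

lemma symm (hs : ShiftSummable g h) : ShiftSummable h g :=
  fun i j ↦ by simpa only [mul_comm] using hs j i

variable [IsTopologicalRing R]

lemma fwdDiff_iter_right (hs : ShiftSummable g h) (k : ℕ) : ShiftSummable g (Δ_[1] ^[k] h) := by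
  intro i j
  simp only [fwdDiff_iter_eq_sum_shift, mul_sum]
  refine summable_sum fun l _ ↦ ((hs i (j + l)).const_smul ((-1) ^ (k - l) * k.choose l : ℤ)).congr
    fun n ↦ ?_
  rw [mul_smul_comm, smul_eq_mul, mul_one, add_assoc]

lemma fwdDiff_iter_left (hs : ShiftSummable g h) (k : ℕ) : ShiftSummable (Δ_[1] ^[k] g) h :=
  (hs.symm.fwdDiff_iter_right k).symm

theorem tsum_fwdDiff_iter_mul [T2Space R] (hs : ShiftSummable g h) {k : ℕ}
    (hg : ∀ m < k, g m = 0) :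
    ∑' n, Δ_[1] ^[k] g n * h n = (-1) ^ k * ∑' n, g (n + k) * Δ_[1] ^[k] h n := by
  induction k generalizing g with
  | zero => simp
  | succ k ih =>
    have hΔg : ∀ m < k, Δ_[1] g m = 0 := fun m hm ↦ by
      simp [fwdDiff, hg m (by omega), hg (m + 1) (by omega)]
    have hH := hs.fwdDiff_iter_right k
    have hsbp := tsum_fwdDiff_mul_of_eq_zero (G := fun n ↦ g (n + k)) (H := Δ_[1] ^[k] h)
      (by simpa using hg k (by omega))
      ((hH (k + 1) 0).congr fun n ↦ by rw [add_zero, show n + (k + 1) = n + 1 + k by omega])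
      (by simpa using hH k 0)
    rw [iterate_succ_apply, ih (by simpa using hs.fwdDiff_iter_left 1) hΔg, iterate_succ_apply',
      pow_succ]
    simp only [fwdDiff_comp_add] at hsbp
    rw [hsbp]
    simp only [add_right_comm _ 1 k, add_assoc]
    ring

end ShiftSummable

end SummationByParts

noncomputable def meixnerCoeff (q : ℝ) (k j : ℕ) : ℝ :=
  k.choose j * q ^ (k - j) * (q - 1) ^ j

/-- `meixner q k` is `q ^ k` times the Meixner polynomial `M_k(·; 1, q)`. -/
noncomputable def meixner (q : ℝ) (k n : ℕ) : ℝ :=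
  ∑ j ∈ range (k + 1), meixnerCoeff q k j * n.choose j

section Meixner

variable {q : ℝ}

theorem pow_mul_meixner (k n : ℕ) :
    q ^ n * meixner q k n = Δ_[1] ^[k] (fun m ↦ q ^ m * (m.choose k : ℝ)) n := by
  rw [fwdDiff_iter_pow_mul, meixner]
  congr 1
  have hΔ : ∀ x ∈ antidiagonal k, (k.choose x.1 : ℝ) *
      (q ^ x.1 * (q - 1) ^ x.2 * Δ_[1] ^[x.1] (fun m ↦ (m.choose k : ℝ)) n) =
        k.choose x.2 * q ^ x.1 * (q - 1) ^ x.2 * n.choose x.2 := by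
    intro x hx
    rw [HasAntidiagonal.mem_antidiagonal] at hx
    subst hx
    rw [fwdDiff_iter_natCast_choose, Nat.choose_symm_add]
    ring
  rw [sum_congr rfl hΔ, ← Nat.sum_antidiagonal_swap]
  simp only [Prod.fst_swap, Prod.snd_swap]
  rw [Nat.sum_antidiagonal_eq_sum_range_succ
    (fun i j ↦ (k.choose i : ℝ) * q ^ j * (q - 1) ^ i * n.choose i)]
  rfl

lemma shiftSummable_pow_mul_choose (hq0 : 0 < q) (hq1 : q < 1) (k a : ℕ) :
    ShiftSummable (fun n ↦ q ^ n * (n.choose k : ℝ)) (fun n ↦ (n.choose a : ℝ)) := by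
  intro i j
  have hgeom : Summable fun n : ℕ ↦ ((n + (i + j) : ℕ) : ℝ) ^ (k + a) * q ^ (n + (i + j)) :=
    (summable_nat_add_iff (f := fun m : ℕ ↦ (m : ℝ) ^ (k + a) * q ^ m) (i + j)).2 <|
      summable_pow_mul_geometric_of_norm_lt_one (k + a) (by rwa [Real.norm_of_nonneg hq0.le])
  refine Summable.of_nonneg_of_le (fun n ↦ by positivity) (fun n ↦ ?_) (hgeom.mul_left (q ^ j)⁻¹)
  have hchoose : (n + i).choose k * (n + j).choose a ≤ (n + (i + j)) ^ (k + a) := by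
    rw [pow_add]
    exact Nat.mul_le_mul
      ((Nat.choose_le_pow _ _).trans (Nat.pow_le_pow_left (by omega) _))
      ((Nat.choose_le_pow _ _).trans (Nat.pow_le_pow_left (by omega) _))
  calc q ^ (n + i) * ((n + i).choose k : ℝ) * ((n + j).choose a : ℝ)
      ≤ q ^ (n + i) * ((n + (i + j) : ℕ) : ℝ) ^ (k + a) := by
        rw [mul_assoc]
        gcongr
        exact_mod_cast hchoose
    _ = (q ^ j)⁻¹ * (((n + (i + j) : ℕ) : ℝ) ^ (k + a) * q ^ (n + (i + j))) := by
        field_simp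
        ring

lemma summable_pow_mul_meixner_mul_choose (hq0 : 0 < q) (hq1 : q < 1) (k a : ℕ) :
    Summable fun n ↦ q ^ n * meixner q k n * n.choose a := by
  simpa only [pow_mul_meixner] using
    ((shiftSummable_pow_mul_choose hq0 hq1 k a).fwdDiff_iter_left k).summable

theorem tsum_pow_mul_meixner_mul_choose (hq0 : 0 < q) (hq1 : q < 1) {k a : ℕ} (hak : a ≤ k) :
    ∑' n, q ^ n * meixner q k n * n.choose a =
      if a = k then (-q) ^ k / (1 - q) ^ (k + 1) else 0 := by
  simp only [pow_mul_meixner]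
  rw [(shiftSummable_pow_mul_choose hq0 hq1 k a).tsum_fwdDiff_iter_mul
    fun m hm ↦ by simp [Nat.choose_eq_zero_of_lt hm]]
  rcases hak.lt_or_eq with hlt | rfl
  · simp [fwdDiff_iter_natCast_choose_of_lt hlt, hlt.ne]
  · have hΔ := fwdDiff_iter_natCast_choose (R := ℝ) 0 a
    simp only [add_zero, Nat.choose_zero_right, Nat.cast_one] at hΔ
    have hterm : ∀ n : ℕ, q ^ (n + a) * ((n + a).choose a : ℝ) * 1 =
        q ^ a * ((n + a).choose a * q ^ n) := fun n ↦ by ring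
    rw [hΔ, if_pos rfl, tsum_congr hterm, tsum_mul_left,
      tsum_choose_mul_geometric_of_norm_lt_one a (by rwa [Real.norm_of_nonneg hq0.le]), neg_pow]
    ring

lemma pow_mul_meixner_mul_meixner (j k n : ℕ) :
    q ^ n * (meixner q j n * meixner q k n) =
      ∑ b ∈ range (j + 1), meixnerCoeff q j b * (q ^ n * meixner q k n * n.choose b) := by
  rw [show meixner q j n = ∑ b ∈ range (j + 1), meixnerCoeff q j b * n.choose b from rfl,
    sum_mul, mul_sum]
  exact sum_congr rfl fun b _ ↦ by ring

lemma summable_pow_mul_meixner_mul_meixner (hq0 : 0 < q) (hq1 : q < 1) (j k : ℕ) :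
    Summable fun n ↦ q ^ n * (meixner q j n * meixner q k n) := by
  simp only [pow_mul_meixner_mul_meixner]
  exact summable_sum fun b _ ↦ (summable_pow_mul_meixner_mul_choose hq0 hq1 k b).mul_left _

lemma tsum_pow_mul_meixner_mul_meixner_of_le (hq0 : 0 < q) (hq1 : q < 1) {j k : ℕ} (hjk : j ≤ k) :
    ∑' n, q ^ n * (meixner q j n * meixner q k n) = if j = k then q ^ k / (1 - q) else 0 := by
  simp only [pow_mul_meixner_mul_meixner]
  rw [Summable.tsum_finsetSum fun b _ ↦
    (summable_pow_mul_meixner_mul_choose hq0 hq1 k b).mul_left _]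
  have horth : ∀ b ∈ range (j + 1), ∑' n, meixnerCoeff q j b * (q ^ n * meixner q k n * n.choose b)
      = if b = k then meixnerCoeff q j k * ((-q) ^ k / (1 - q) ^ (k + 1)) else 0 := by
    intro b hb
    rw [tsum_mul_left, tsum_pow_mul_meixner_mul_choose hq0 hq1 (by grind)]
    split_ifs with h <;> simp [h]
  rw [sum_congr rfl horth, sum_ite_eq']
  rcases hjk.lt_or_eq with hlt | rfl
  · simp [hlt.ne, show ¬ k < j + 1 by omega]
  · have h1q : 1 - q ≠ 0 := by linarith
    simp only [self_mem_range_succ, if_true, meixnerCoeff, Nat.choose_self, Nat.sub_self,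
      pow_zero, Nat.cast_one, one_mul]
    rw [← mul_div_assoc, ← mul_pow, show (q - 1) * -q = q * (1 - q) by ring, mul_pow, pow_succ]
    field_simp

theorem tsum_pow_mul_meixner_mul_meixner (hq0 : 0 < q) (hq1 : q < 1) (j k : ℕ) :
    ∑' n, q ^ n * (meixner q j n * meixner q k n) = if j = k then q ^ k / (1 - q) else 0 := by
  rcases le_total j k with h | h
  · exact tsum_pow_mul_meixner_mul_meixner_of_le hq0 hq1 h
  · have hcomm : ∀ n, q ^ n * (meixner q j n * meixner q k n) =
        q ^ n * (meixner q k n * meixner q j n) := fun n ↦ by ring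
    rw [tsum_congr hcomm, tsum_pow_mul_meixner_mul_meixner_of_le hq0 hq1 h]
    rcases eq_or_ne j k with rfl | hne
    · rfl
    · simp [hne, hne.symm]

end Meixner

theorem tsum_mul_sum_sq_of_orthonormal {ι : Type*} [Fintype ι] [DecidableEq ι] {w : ℕ → ℝ}
    {φ : ι → ℕ → ℝ} (hsum : ∀ i j, Summable fun n ↦ w n * (φ i n * φ j n))
    (horth : ∀ i j, ∑' n, w n * (φ i n * φ j n) = if i = j then 1 else 0) (u : ι → ℝ) :
    ∑' n, w n * (∑ i, u i * φ i n) ^ 2 = ∑ i, u i ^ 2 := by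
  have hexpand : ∀ n, w n * (∑ i, u i * φ i n) ^ 2 =
      ∑ i, ∑ j, u i * u j * (w n * (φ i n * φ j n)) := fun n ↦ by
    rw [sq, sum_mul_sum, mul_sum]
    refine sum_congr rfl fun i _ ↦ ?_
    rw [mul_sum]
    exact sum_congr rfl fun j _ ↦ by ring
  rw [tsum_congr hexpand,
    Summable.tsum_finsetSum fun i _ ↦ summable_sum fun j _ ↦ (hsum i j).mul_left _]
  refine sum_congr rfl fun i _ ↦ ?_
  rw [Summable.tsum_finsetSum fun j _ ↦ (hsum i j).mul_left _]
  simp [tsum_mul_left, horth, sq]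

lemma Pc_natCast {d : ℕ} (c : Fin (d + 1) → ℝ) (n : ℕ) : Pc c n = ∑ j, c j * n.choose j := by
  simp [Pc, binom_natCast]

lemma Pc_mulVec {d : ℕ} {ι : Type*} [Fintype ι] (M : Matrix (Fin (d + 1)) ι ℝ) (u : ι → ℝ)
    (x : ℝ) : Pc (M *ᵥ u) x = ∑ k, u k * Pc (fun j ↦ M j k) x := by
  simp only [Pc, mulVec, dotProduct, sum_mul, mul_sum]
  rw [sum_comm]
  exact sum_congr rfl fun k _ ↦ sum_congr rfl fun j _ ↦ by ring

/-- Column `k` is `meixner q k`, normalised in `ℓ²(qⁿ)`. -/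
noncomputable def meixnerMatrix (q : ℝ) (d : ℕ) : Matrix (Fin (d + 1)) (Fin (d + 1)) ℝ :=
  Matrix.of fun j k ↦ √((1 - q) / q ^ (k : ℕ)) * meixnerCoeff q k j

section MeixnerMatrix

variable {q : ℝ} {d : ℕ}

lemma Pc_meixnerMatrix_col (k : Fin (d + 1)) (n : ℕ) :
    Pc (fun j ↦ meixnerMatrix q d j k) n = √((1 - q) / q ^ (k : ℕ)) * meixner q k n := by
  rw [Pc_natCast, meixner, mul_sum]
  simp only [meixnerMatrix, Matrix.of_apply, mul_assoc]
  rw [Fin.sum_univ_eq_sum_range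
    (fun j ↦ √((1 - q) / q ^ (k : ℕ)) * (meixnerCoeff q k j * n.choose j)) (d + 1)]
  refine (sum_subset (range_subset_range.2 (by omega)) fun j _ hj ↦ ?_).symm
  rw [mem_range, not_lt] at hj
  simp [meixnerCoeff, Nat.choose_eq_zero_of_lt (Nat.lt_of_succ_le hj)]

theorem tsum_pow_mul_Pc_meixnerMatrix_mulVec (hq0 : 0 < q) (hq1 : q < 1) (u : Fin (d + 1) → ℝ) :
    ∑' n : ℕ, q ^ n * Pc (meixnerMatrix q d *ᵥ u) n ^ 2 = ∑ k, u k ^ 2 := by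
  simp only [Pc_mulVec, Pc_meixnerMatrix_col]
  refine tsum_mul_sum_sq_of_orthonormal (fun j k ↦ ?_) (fun j k ↦ ?_) u
  · simpa only [mul_mul_mul_comm, mul_left_comm (q ^ _)] using
      (summable_pow_mul_meixner_mul_meixner hq0 hq1 j k).mul_left
        (√((1 - q) / q ^ (j : ℕ)) * √((1 - q) / q ^ (k : ℕ)))
  · have h1q : 0 < 1 - q := by linarith
    have hnorm : ∀ n : ℕ, q ^ n * (√((1 - q) / q ^ (j : ℕ)) * meixner q j n *
        (√((1 - q) / q ^ (k : ℕ)) * meixner q k n)) = √((1 - q) / q ^ (j : ℕ)) *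
          √((1 - q) / q ^ (k : ℕ)) * (q ^ n * (meixner q j n * meixner q k n)) :=
      fun n ↦ by ring
    rw [tsum_congr hnorm, tsum_mul_left, tsum_pow_mul_meixner_mul_meixner hq0 hq1]
    rcases eq_or_ne j k with rfl | h
    · rw [if_pos rfl, if_pos rfl, Real.mul_self_sqrt (by positivity)]
      field_simp
    · rw [if_neg (Fin.val_ne_of_ne h), if_neg h, mul_zero]

theorem det_meixnerMatrix :
    (meixnerMatrix q d).det = ∏ k : Fin (d + 1), √((1 - q) / q ^ (k : ℕ)) * (q - 1) ^ (k : ℕ) := by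
  rw [Matrix.det_of_isUpperTriangular fun j k hkj ↦ ?_]
  · simp [meixnerMatrix, meixnerCoeff]
  · simp [meixnerMatrix, meixnerCoeff, Nat.choose_eq_zero_of_lt (show (k : ℕ) < j from hkj)]

end MeixnerMatrix

lemma volume_setOf_sum_sq_le {ι : Type*} [Fintype ι] {t : ℝ} (ht : 0 ≤ t) :
    volume {u : ι → ℝ | ∑ i, u i ^ 2 ≤ t ^ 2} =
      ENNReal.ofReal (t ^ Fintype.card ι) * volume (Metric.ball (0 : EuclideanSpace ℝ ι) 1) := by
  have hball : (WithLp.ofLp : EuclideanSpace ℝ ι → ι → ℝ) ⁻¹' {u | ∑ i, u i ^ 2 ≤ t ^ 2} =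
      Metric.closedBall 0 t := by
    ext x
    simp only [Set.mem_preimage, Set.mem_ofPred_eq, mem_closedBall_zero_iff,
      ← sq_le_sq₀ (norm_nonneg x) ht, EuclideanSpace.norm_sq_eq, Real.norm_eq_abs, sq_abs]
  rw [← (PiLp.volume_preserving_ofLp ι).measure_preimage
    (measurableSet_le (by fun_prop) measurable_const).nullMeasurableSet, hball,
    Measure.addHaar_closedBall _ _ ht, finrank_euclideanSpace]

theorem volume_setOf_le_sq_of_mulVec {ι : Type*} [Fintype ι] [DecidableEq ι]
    {Q : (ι → ℝ) → ℝ} (N : Matrix ι ι ℝ) (hN : IsUnit N.det) (hQ : ∀ u, Q (N *ᵥ u) = ∑ i, u i ^ 2)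
    {t : ℝ} (ht : 0 ≤ t) :
    volume {c | Q c ≤ t ^ 2} = ENNReal.ofReal |N.det| *
      (ENNReal.ofReal (t ^ Fintype.card ι) * volume (Metric.ball (0 : EuclideanSpace ℝ ι) 1)) := by
  have himage : {c | Q c ≤ t ^ 2} = toLin' N '' {u | ∑ i, u i ^ 2 ≤ t ^ 2} := by
    ext c
    refine ⟨fun hc ↦ ⟨N⁻¹ *ᵥ c, ?_, ?_⟩, ?_⟩
    · simpa only [Set.mem_ofPred_eq, ← hQ, mulVec_mulVec, mul_nonsing_inv _ hN, one_mulVec]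
        using hc
    · rw [toLin'_apply, mulVec_mulVec, mul_nonsing_inv _ hN, one_mulVec]
    · rintro ⟨u, hu, rfl⟩
      simpa only [Set.mem_ofPred_eq, toLin'_apply, hQ] using hu
  rw [himage, Measure.addHaar_image_linearMap, LinearMap.det_toLin', volume_setOf_sum_sq_le ht]

theorem volume_setOf_tsum_pow_mul_Pc_sq_le {q t : ℝ} (hq0 : 0 < q) (hq1 : q < 1) (ht : 0 ≤ t)
    (d : ℕ) :
    volume {c : Fin (d + 1) → ℝ | ∑' n : ℕ, q ^ n * Pc c n ^ 2 ≤ t ^ 2} =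
      ENNReal.ofReal |(meixnerMatrix q d).det| *
        (ENNReal.ofReal (t ^ (d + 1)) *
          volume (Metric.ball (0 : EuclideanSpace ℝ (Fin (d + 1))) 1)) := by
  have hdet : IsUnit (meixnerMatrix q d).det := by
    rw [det_meixnerMatrix, isUnit_iff_ne_zero, prod_ne_zero_iff]
    exact fun k _ ↦ mul_ne_zero (by positivity) (pow_ne_zero _ (by linarith))
  simpa only [Fintype.card_fin] using
    volume_setOf_le_sq_of_mulVec _ hdet (tsum_pow_mul_Pc_meixnerMatrix_mulVec hq0 hq1) ht

lemma sum_fin_natCast_add_half (d : ℕ) :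
    ∑ k : Fin (d + 1), ((k : ℕ) + 1 / 2 : ℝ) = ((d : ℝ) + 1) ^ 2 / 2 := by
  rw [Fin.sum_univ_eq_sum_range (fun k ↦ (k + 1 / 2 : ℝ))]
  induction d with
  | zero => norm_num
  | succ d ih =>
    rw [sum_range_succ, ih]
    push_cast
    ring

lemma sum_fin_add_one (d : ℕ) : ∑ k : Fin (d + 1), ((k : ℕ) + 1) = (d + 1) * (d + 2) / 2 := by
  have hshift := sum_range_succ' (fun k ↦ k) (d + 1)
  rw [add_zero] at hshift
  rw [Fin.sum_univ_eq_sum_range (· + 1), ← hshift, sum_range_id, mul_comm]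
  rfl

lemma abs_det_meixnerMatrix_inv_sq {A : ℝ} (hA : 1 < A) (d : ℕ) :
    |(meixnerMatrix (A ^ 2)⁻¹ d).det| =
      (A ^ 2 - 1) ^ ((((d : ℝ) + 1) ^ 2) / 2) * (A ^ (((d + 1) * (d + 2)) / 2))⁻¹ := by
  have hB : 0 < A ^ 2 - 1 := by nlinarith
  have hdiag : ∀ k : ℕ, |√((1 - (A ^ 2)⁻¹) / ((A ^ 2)⁻¹) ^ k) * ((A ^ 2)⁻¹ - 1) ^ k| =
      (A ^ 2 - 1) ^ ((k : ℝ) + 1 / 2) / A ^ (k + 1) := by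
    intro k
    have h1 : 1 - (A ^ 2)⁻¹ = (A ^ 2 - 1) / A ^ 2 := by field_simp
    have hsq : (A ^ 2 - 1) / A ^ 2 / ((A ^ 2)⁻¹) ^ k = (√(A ^ 2 - 1) * A ^ k / A) ^ 2 := by
      rw [div_pow, mul_pow, Real.sq_sqrt hB.le, inv_pow, div_inv_eq_mul, ← pow_mul, ← pow_mul,
        mul_comm 2 k]
      ring
    rw [abs_mul, abs_pow, abs_sub_comm, h1, hsq, Real.sqrt_sq (by positivity), Real.rpow_add hB,
      Real.rpow_natCast, ← Real.sqrt_eq_rpow, abs_of_pos (by positivity),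
      abs_of_pos (by positivity), div_pow, ← pow_mul, pow_succ]
    field_simp
    ring
  rw [det_meixnerMatrix, abs_prod, prod_congr rfl fun (k : Fin (d + 1)) _ ↦ hdiag k,
    prod_div_distrib, ← Real.rpow_sum_of_pos hB, sum_fin_natCast_add_half, prod_pow_eq_pow_sum,
    sum_fin_add_one, div_eq_mul_inv]

/-- The volume of `{c ∈ ℝ^{d+1} : ∑_{n≥0} P_c(n)² A^{-2n} ≤ t²}` equals
`(A²-1)^{(d+1)²/2} · A^{-(d+1)(d+2)/2} · t^{d+1} · ω_{d+1}`, where `ω_{d+1}` is the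
volume of the unit Euclidean ball in `ℝ^{d+1}`. -/
theorem stmt_19 (A t : ℝ) (hA : 1 < A) (ht : 0 < t) (d : ℕ) :
    (volume {c : Fin (d + 1) → ℝ |
        (∑' n : ℕ, (Pc c (n : ℝ)) ^ 2 / A ^ (2 * n)) ≤ t ^ 2}).toReal
      = (A ^ 2 - 1) ^ ((((d : ℝ) + 1) ^ 2) / 2) * (A ^ (((d + 1) * (d + 2)) / 2))⁻¹ *
          t ^ (d + 1) *
          (volume (Metric.ball (0 : EuclideanSpace ℝ (Fin (d + 1))) 1)).toReal := by
  have hq0 : 0 < (A ^ 2)⁻¹ := by positivity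
  have hq1 : (A ^ 2)⁻¹ < 1 := inv_lt_one_of_one_lt₀ (by nlinarith)
  have hweight : ∀ (c : Fin (d + 1) → ℝ) (n : ℕ),
      Pc c n ^ 2 / A ^ (2 * n) = (A ^ 2)⁻¹ ^ n * Pc c n ^ 2 :=
    fun c n ↦ by rw [pow_mul, inv_pow, div_eq_inv_mul]
  simp only [hweight]
  rw [volume_setOf_tsum_pow_mul_Pc_sq_le hq0 hq1 ht.le, ENNReal.toReal_mul, ENNReal.toReal_mul,
    ENNReal.toReal_ofReal (abs_nonneg _), ENNReal.toReal_ofReal (by positivity),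
    abs_det_meixnerMatrix_inv_sq hA]
  ring
end
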